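/- For every x and every f(x) ∈ ℕ with f(x) ≤ F_n(x+2) for some fixed n, we have ω·f(x) <_{F_n(x+2)} ω^ω, and consequently ω_{x+2} + ω_x^{ω·f(x)} <_{F_n(x+2)} ω_{x+2}·2, where ω_x^α is defined by ω_0^α = α, ω_{k+1}^α = ω^{ω_k^α}. -/

import Mathlib

namespace SlowCon

open ONote

/-- Fast-growing hierarchy with `F_{α+1}(n) = F_α^[n+1](n)`, standard fundamental sequences. -/
def F : ONote → ℕ → ℕ
  | o =>
    match fundamentalSequence o, fundamentalSequence_has_prop o with
    | Sum.inl none, _ => fun n => n + 1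
    | Sum.inl (some a), h =>
      have : a < o := by rw [ONote.lt_def, h.1]; exact Order.lt_succ _
      fun n => (F a)^[n + 1] n
    | Sum.inr f, h => fun n =>
      have : f n < o := (h.2.1 n).2.1
      F (f n) n
  termination_by o => o

/-- The `k`-th member of the fundamental sequence (predecessor at successors, `0` at `0`). -/
def fs (o : ONote) (k : ℕ) : ONote :=
  match fundamentalSequence o with
  | Sum.inl none => 0
  | Sum.inl (some a) => a
  | Sum.inr f => f k

/-- `stepDown k a b` : one can descend from `b` to `a` via `k`-th members of
fundamental sequences (at least one step). -/
def stepDown (k : ℕ) (a b : ONote) : Prop :=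
  Relation.TransGen (fun x y => y ≠ 0 ∧ x = fs y k) a b

/-- Tower of ω's: `wtower 0 = 1`, `wtower (n+1) = ω ^ wtower n`. -/
def wtower : ℕ → ONote
  | 0 => 1
  | n + 1 => ONote.oadd (wtower n) 1 0

/-- `F_{ε₀}(n) := F_{ω_{n+1}}(n)`. -/
def Feps (n : ℕ) : ℕ := F (wtower (n + 1)) n

/-- Ordinals `≤ ε₀`: `none` stands for `ε₀`, `some a` for `a < ε₀`. -/
def fsE : Option ONote → ℕ → Option ONote
  | none, k => some (wtower (k + 1))
  | some a, k => some (fs a k)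

/-- Step-down relation on ordinals `≤ ε₀` (with `{ε₀}(k) = ω_{k+1}`). -/
def stepDownE (k : ℕ) (a b : Option ONote) : Prop :=
  Relation.TransGen (fun x y => y ≠ some 0 ∧ x = fsE y k) a b

/-- Fast-growing hierarchy at indices `≤ ε₀`. -/
def FE : Option ONote → ℕ → ℕ
  | none, n => Feps n
  | some a, n => F a n

/-- Normal form for indices `≤ ε₀`. -/
def NFE : Option ONote → Prop
  | none => True
  | some a => a.NF

end SlowCon

namespace SlowCon

open ONote

/-- `iterRel G j x y` : `y` is obtained from `x` by `j` applications of the graph `G`. -/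
def iterRel (G : ℕ → ℕ → Prop) : ℕ → ℕ → ℕ → Prop
  | 0, x, y => y = x
  | j + 1, x, y => ∃ z, iterRel G j x z ∧ G z y

/-- Graph relation of the fast-growing hierarchy: `FRel α x y` means `F_α(x) = y`. -/
def FRel : ONote → ℕ → ℕ → Prop
  | o =>
    match fundamentalSequence o, fundamentalSequence_has_prop o with
    | Sum.inl none, _ => fun x y => y = x + 1
    | Sum.inl (some a), h =>
      have : a < o := by rw [ONote.lt_def, h.1]; exact Order.lt_succ _
      fun x y => iterRel (FRel a) (x + 1) x y
    | Sum.inr f, h => fun x y =>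
      have : f x < o := (h.2.1 x).2.1
      FRel (f x) x y
  termination_by o => o

/-- Graph relation for indices `≤ ε₀`, with `F_{ε₀}(x) = F_{ω_{x+1}}(x)`. -/
def FRelE : Option ONote → ℕ → ℕ → Prop
  | none, x, y => FRel (wtower (x + 1)) x y
  | some a, x, y => FRel a x y

/-- `OltE a b` : `a < b` among ordinals `≤ ε₀` (`none` = `ε₀`). -/
def OltE : Option ONote → Option ONote → Prop
  | some x, some y => x < y
  | some _, none => True
  | none, _ => False

/-- Finite levels of the fast-growing hierarchy. -/
def Ffin : ℕ → ℕ → ℕ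
  | 0 => fun m => m + 1
  | k + 1 => fun m => (Ffin k)^[m + 1] m

/-- `tower x α = ω_x^α` : `x`-fold exponential tower over `α`. -/
def tower : ℕ → ONote → ONote
  | 0, a => a
  | k + 1, a => ONote.oadd (tower k a) 1 0

/-- Progressiveness of a predicate on ordinal notations below ε₀. -/
def ProgO (Q : ONote → Prop) : Prop := ∀ a : ONote, (∀ b < a, Q b) → Q a

/-- Transfinite induction up to `α` for `Q`. -/
def TIO (α : ONote) (Q : ONote → Prop) : Prop := ProgO Q → ∀ β < α, Q β

open Classical in
/-- `FepsInv x` : the largest `z ≤ x` with `F_{ε₀}(z) ≤ x`, or `0` if there is none. -/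
noncomputable def FepsInv (x : ℕ) : ℕ :=
  ((Finset.range (x + 1)).filter fun z => Feps z ≤ x).sup id

end SlowCon

/-!
Descend along `K`-th members of fundamental sequences:
`ω^ω → ω^(K+1) → ⋯ → ω^2 → ω·(K+1) → ⋯ → ω·m`, where each `⋯` lowers a coefficient one unit at a
time; this works because the tail created by such a step can itself be stepped down to `0`.
Steps in an exponent lift through `ω^·`, hence through towers, so `ω_x^{ω·m} <_K ω_{x+2}`.
Finally `{ω_{x+2}·2}(K) = ω_{x+2} + {ω_{x+2}}(K)`, so prefixing `ω_{x+2}` to that descent, minus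
its last step, gives the second claim.
-/

namespace SlowCon

open ONote Relation

def FsStep (k : ℕ) (a b : ONote) : Prop := b ≠ 0 ∧ a = fs b k

theorem natPred_one : (1 : ℕ+).natPred = 0 := rfl

theorem fs_of_fundamentalSequence_eq_some {b b' : ONote}
    (h : fundamentalSequence b = Sum.inl (some b')) (k : ℕ) : fs b k = b' := by
  simp [fs, h]

theorem fs_of_fundamentalSequence_eq_inr {b : ONote} {f : ℕ → ONote}
    (h : fundamentalSequence b = Sum.inr f) (k : ℕ) : fs b k = f k := by
  simp [fs, h]

theorem eq_zero_of_fundamentalSequence_eq_none {b : ONote}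
    (h : fundamentalSequence b = Sum.inl none) : b = 0 :=
  (fundamentalSequenceProp_inl_none b).1 (h ▸ fundamentalSequence_has_prop b)

theorem fs_lt {b : ONote} (hb : b ≠ 0) (k : ℕ) : fs b k < b := by
  have h := fundamentalSequence_has_prop b
  rcases e : fundamentalSequence b with (_ | b') | f
  · exact absurd (eq_zero_of_fundamentalSequence_eq_none e) hb
  · rw [e] at h
    rw [fs_of_fundamentalSequence_eq_some e, lt_def, h.1]
    exact Order.lt_succ _
  · rw [e] at h
    rw [fs_of_fundamentalSequence_eq_inr e]
    exact (h.2.1 k).2.1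

theorem fs_oadd_of_ne_zero (e : ONote) (n : ℕ+) {a : ONote} (ha : a ≠ 0) (k : ℕ) :
    fs (oadd e n a) k = oadd e n (fs a k) := by
  rcases h : fundamentalSequence a with (_ | a') | f
  · exact absurd (eq_zero_of_fundamentalSequence_eq_none h) ha
  · simp [fs, fundamentalSequence, h]
  · simp [fs, fundamentalSequence, h]

theorem fs_oadd_succPNat_succ (e : ONote) (p k : ℕ) :
    fs (oadd e (p + 1).succPNat 0) k = oadd e p.succPNat (fs (oadd e 1 0) k) := by
  rcases h : fundamentalSequence e with (_ | e') | f
  · obtain rfl := eq_zero_of_fundamentalSequence_eq_none h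
    simp [fs, fundamentalSequence, natPred_one]
  all_goals simp [fs, fundamentalSequence, h, natPred_one]

theorem fs_oadd_one_zero_of_eq_some {b b' : ONote}
    (h : fundamentalSequence b = Sum.inl (some b')) (k : ℕ) :
    fs (oadd b 1 0) k = oadd b' k.succPNat 0 := by
  simp [fs, fundamentalSequence, h, natPred_one]

theorem fs_oadd_one_zero_of_eq_inr {b : ONote} {f : ℕ → ONote}
    (h : fundamentalSequence b = Sum.inr f) (k : ℕ) :
    fs (oadd b 1 0) k = oadd (f k) 1 0 := by
  simp [fs, fundamentalSequence, h, natPred_one]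

theorem stepDown.lt {k : ℕ} {a b : ONote} (h : stepDown k a b) : a < b := by
  induction h with
  | single hab => exact hab.2 ▸ fs_lt hab.1 k
  | tail _ hbc ih => exact ih.trans (hbc.2 ▸ fs_lt hbc.1 k)

theorem reflTransGen_zero (k : ℕ) (b : ONote) : ReflTransGen (FsStep k) 0 b := by
  induction b using (InvImage.wf repr Ordinal.lt_wf).induction with
  | _ b ih =>
    rcases eq_or_ne b 0 with rfl | hb
    · exact .refl
    · exact (ih _ (fs_lt hb k)).tail ⟨hb, rfl⟩

theorem stepDown_zero {k : ℕ} {b : ONote} (hb : b ≠ 0) : stepDown k 0 b :=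
  TransGen.tail' (reflTransGen_zero k _) ⟨hb, rfl⟩

theorem fsStep_oadd {k : ℕ} {a b : ONote} (e : ONote) (n : ℕ+) (h : FsStep k a b) :
    FsStep k (oadd e n a) (oadd e n b) :=
  ⟨(oadd_pos e n b).ne', by rw [fs_oadd_of_ne_zero e n h.1, h.2]⟩

theorem stepDown_oadd_succPNat {k : ℕ} {a e : ONote} (p : ℕ) (h : stepDown k a (oadd e 1 0)) :
    stepDown k (oadd e p.succPNat a) (oadd e (p + 1).succPNat 0) := by
  obtain ⟨c, hac, hc⟩ : ∃ c, ReflTransGen (FsStep k) a c ∧ FsStep k c (oadd e 1 0) :=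
    TransGen.tail'_iff.1 h
  refine TransGen.tail' (hac.lift (oadd e p.succPNat) fun _ _ => fsStep_oadd e p.succPNat)
    ⟨(oadd_pos _ _ _).ne', ?_⟩
  rw [fs_oadd_succPNat_succ, hc.2]

theorem reflTransGen_oadd_succPNat_of_le {k p q : ℕ} (e : ONote) (hqp : q ≤ p) :
    ReflTransGen (FsStep k) (oadd e q.succPNat 0) (oadd e p.succPNat 0) := by
  induction p, hqp using Nat.le_induction with
  | base => exact .refl
  | succ p _ ih =>
    exact ih.trans (stepDown_oadd_succPNat p (stepDown_zero (oadd_pos e 1 0).ne')).to_reflTransGen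

theorem stepDown_oadd_one_zero_of_fsStep {k : ℕ} {a b : ONote} (h : FsStep k a b) :
    stepDown k (oadd a 1 0) (oadd b 1 0) := by
  obtain ⟨hb, rfl⟩ := h
  rcases e : fundamentalSequence b with (_ | b') | f
  · exact absurd (eq_zero_of_fundamentalSequence_eq_none e) hb
  · rw [fs_of_fundamentalSequence_eq_some e]
    exact TransGen.tail' (reflTransGen_oadd_succPNat_of_le b' (Nat.zero_le k))
      ⟨(oadd_pos _ _ _).ne', (fs_oadd_one_zero_of_eq_some e k).symm⟩
  · rw [fs_of_fundamentalSequence_eq_inr e]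
    exact .single ⟨(oadd_pos _ _ _).ne', (fs_oadd_one_zero_of_eq_inr e k).symm⟩

theorem stepDown.oadd_one_zero {k : ℕ} {a b : ONote} (h : stepDown k a b) :
    stepDown k (oadd a 1 0) (oadd b 1 0) :=
  h.lift' (fun c => oadd c 1 0) fun _ _ => stepDown_oadd_one_zero_of_fsStep

theorem stepDown.tower {k : ℕ} {a b : ONote} (h : stepDown k a b) (x : ℕ) :
    stepDown k (tower x a) (tower x b) := by
  induction x with
  | zero => exact h
  | succ x ih => exact ih.oadd_one_zero

theorem omega_mul_ofNat_succ (q : ℕ) : omega * ofNat (q + 1) = oadd 1 q.succPNat 0 := by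
  show oadd 1 (1 * q.succPNat) 0 = _
  rw [one_mul]

theorem stepDown_omega_mul_ofNat {k m : ℕ} (hk : 1 ≤ k) (hm : m ≤ k + 1) :
    stepDown k (omega * ofNat m) (oadd omega 1 0) := by
  have two_stepDown_omega : stepDown k (ofNat 2) omega :=
    TransGen.tail' (reflTransGen_oadd_succPNat_of_le 0 hk)
      ⟨(oadd_pos _ _ _).ne', (fs_oadd_one_zero_of_eq_some rfl k).symm⟩
  have omega_mul_reaches : ReflTransGen (FsStep k) (omega * ofNat m) (oadd 1 k.succPNat 0) := by
    rcases m with _ | q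
    · exact reflTransGen_zero k _
    · rw [omega_mul_ofNat_succ]
      exact reflTransGen_oadd_succPNat_of_le 1 (by omega)
  exact (TransGen.tail' omega_mul_reaches ⟨(oadd_pos _ _ _).ne',
    (fs_oadd_one_zero_of_eq_some rfl k).symm⟩).trans two_stepDown_omega.oadd_one_zero

instance nf_omega : NF omega := NF.oadd_zero 1 1

instance nf_tower (x : ℕ) (a : ONote) [NF a] : NF (tower x a) := by
  induction x with
  | zero => assumption
  | succ x ih => exact NF.oadd_zero _ 1

theorem wtower_succ (x : ℕ) : wtower (x + 1) = oadd (wtower x) 1 0 := rfl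

theorem tower_wtower (x y : ℕ) : tower x (wtower y) = wtower (x + y) := by
  induction x with
  | zero => rw [Nat.zero_add]; rfl
  | succ x ih => rw [tower, ih, Nat.succ_add, wtower_succ]

instance nf_wtower (x : ℕ) : NF (wtower x) := by
  rw [← add_zero x, ← tower_wtower]
  exact nf_tower x 1

theorem oadd_one_zero_add {e b : ONote} [NF e] [NF b] (h : b < oadd e 1 0) :
    oadd e 1 0 + b = oadd e 1 b := by
  have : NF (oadd e 1 b) := NF.oadd ‹_› 1 (NF.below_of_lt' (by simpa [lt_def] using h) ‹_›)
  rw [← repr_inj]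
  simp [repr_add]

theorem lt_Ffin (n m : ℕ) : m < Ffin n m := by
  induction n generalizing m with
  | zero => exact Nat.lt_succ_self m
  | succ n ih =>
    calc m < Ffin n m := ih m
      _ ≤ (Ffin n)^[m] (Ffin n m) := Function.id_le_iterate_of_id_le (fun y => (ih y).le) m _
      _ = Ffin (n + 1) m := (Function.iterate_succ_apply _ _ _).symm

end SlowCon

/-- if `m ≤ F_n(x+2) =: K` then `ω·m <_K ω^ω` and
`ω_{x+2} + ω_x^{ω·m} <_K ω_{x+2}·2`. -/
theorem stmt10 : ∀ x n m : ℕ, m ≤ SlowCon.Ffin n (x + 2) →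
    SlowCon.stepDown (SlowCon.Ffin n (x + 2)) (ONote.omega * ONote.ofNat m)
      (ONote.oadd ONote.omega 1 0) ∧
    SlowCon.stepDown (SlowCon.Ffin n (x + 2))
      (SlowCon.wtower (x + 2) + SlowCon.tower x (ONote.omega * ONote.ofNat m))
      (ONote.oadd (SlowCon.wtower (x + 1)) 2 0) := by
  intro x n m hm
  have hK : 1 ≤ SlowCon.Ffin n (x + 2) := by have := SlowCon.lt_Ffin n (x + 2); omega
  have h₁ := SlowCon.stepDown_omega_mul_ofNat (m := m) hK (by omega)
  have h₂ := h₁.tower x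
  rw [show ONote.oadd ONote.omega 1 0 = SlowCon.wtower 2 from rfl, SlowCon.tower_wtower,
    SlowCon.wtower_succ] at h₂
  refine ⟨h₁, ?_⟩
  rw [SlowCon.wtower_succ, SlowCon.oadd_one_zero_add h₂.lt]
  exact SlowCon.stepDown_oadd_succPNat 0 h₂
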